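/- If the canonical connection of an AP-space is semi-symmetric with torsion Λ^α_{μν} = δ^α_μ w_ν − δ^α_ν w_μ for a 1-form w, then the curvature of the dual connection is R̃^α_{μνσ} = δ^α_σ w_{ν|μ} − δ^α_ν w_{σ|μ}, and consequently the contracted tensor R̃_{μν} := R̃^α_{μνα} equals (n−1) w_{ν|μ}. -/

import Mathlib

/- Local coordinate formalization of linear connections, curvature, torsion and
covariant differentiation, following the index conventions of the paper:
A^μ_{|ν} = A^μ_{,ν} + Γ^μ_{εν} A^ε, and
R^α_{μνσ} = Γ^α_{μσ,ν} − Γ^α_{μν,σ} + Γ^ε_{μσ}Γ^α_{εν} − Γ^ε_{μν}Γ^α_{εσ}. -/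

noncomputable section

open scoped BigOperators

/-- Partial derivative of a scalar field in the direction of the ν-th coordinate. -/
def pd {n : ℕ} (f : (Fin n → ℝ) → ℝ) (ν : Fin n) (x : Fin n → ℝ) : ℝ :=
  fderiv ℝ f x (Pi.single ν 1)

/-- Coefficients Γ^α_{μν} of a linear connection (in global coordinates on ℝⁿ). -/
abbrev Conn (n : ℕ) := Fin n → Fin n → Fin n → (Fin n → ℝ) → ℝ

/-- Curvature tensor R^α_{μνσ} of a linear connection. -/
def curv {n : ℕ} (Γ : Conn n) (α μ ν σ : Fin n) (x : Fin n → ℝ) : ℝ :=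
  pd (Γ α μ σ) ν x - pd (Γ α μ ν) σ x
    + ∑ ε, Γ ε μ σ x * Γ α ε ν x - ∑ ε, Γ ε μ ν x * Γ α ε σ x

/-- Torsion tensor Λ^α_{μν} = Γ^α_{μν} − Γ^α_{νμ}. -/
def torsion {n : ℕ} (Γ : Conn n) : Conn n := fun α μ ν x => Γ α μ ν x - Γ α ν μ x

/-- The dual connection Γ̃^α_{μν} = Γ^α_{νμ}. -/
def dualConn {n : ℕ} (Γ : Conn n) : Conn n := fun α μ ν => Γ α ν μ

/-- The symmetric connection Γ̂^α_{μν} = (1/2)(Γ^α_{μν} + Γ^α_{νμ}). -/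
def symConn {n : ℕ} (Γ : Conn n) : Conn n := fun α μ ν x => (Γ α μ ν x + Γ α ν μ x) / 2

/-- Covariant derivative T^α_{μν|σ} of a (1,2)-tensor field with respect to Γ. -/
def covd12 {n : ℕ} (Γ T : Conn n) (α μ ν σ : Fin n) (x : Fin n → ℝ) : ℝ :=
  pd (T α μ ν) σ x + ∑ ε, Γ α ε σ x * T ε μ ν x
    - ∑ ε, Γ ε μ σ x * T α ε ν x - ∑ ε, Γ ε ν σ x * T α μ ε x

/-- Covariant derivative w_{μ|ν} of a covector field with respect to Γ. -/
def covd01 {n : ℕ} (Γ : Conn n) (w : Fin n → (Fin n → ℝ) → ℝ) (μ ν : Fin n)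
    (x : Fin n → ℝ) : ℝ :=
  pd (w μ) ν x - ∑ ε, Γ ε μ ν x * w ε x

/-- Covariant derivative T_{μν|σ} of a (0,2)-tensor field with respect to Γ. -/
def covd02 {n : ℕ} (Γ : Conn n) (T : Fin n → Fin n → (Fin n → ℝ) → ℝ) (μ ν σ : Fin n)
    (x : Fin n → ℝ) : ℝ :=
  pd (T μ ν) σ x - ∑ ε, Γ ε μ σ x * T ε ν x - ∑ ε, Γ ε ν σ x * T μ ε x

/-- Covariant derivative T^α_{μνσ|β} of a (1,3)-tensor field with respect to Γ. -/
def covd13 {n : ℕ} (Γ : Conn n) (T : Fin n → Fin n → Fin n → Fin n → (Fin n → ℝ) → ℝ)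
    (α μ ν σ β : Fin n) (x : Fin n → ℝ) : ℝ :=
  pd (T α μ ν σ) β x + ∑ ε, Γ α ε β x * T ε μ ν σ x
    - ∑ ε, Γ ε μ β x * T α ε ν σ x - ∑ ε, Γ ε ν β x * T α μ ε σ x
    - ∑ ε, Γ ε σ β x * T α μ ν ε x

/-- The Wanas tensor W^α_{μνσ} = Λ^α_{σν|μ} − Λ^ε_{σν} Λ^α_{εμ}. -/
def Wanas {n : ℕ} (Γ : Conn n) (α μ ν σ : Fin n) (x : Fin n → ℝ) : ℝ :=
  covd12 Γ (torsion Γ) α σ ν μ x - ∑ ε, torsion Γ ε σ ν x * torsion Γ α ε μ x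

/-- The connection is smooth. -/
def SmoothConn {n : ℕ} (Γ : Conn n) : Prop := ∀ α μ ν, ContDiff ℝ (⊤ : ℕ∞) (Γ α μ ν)

/-- The connection has identically vanishing curvature. -/
def Flat {n : ℕ} (Γ : Conn n) : Prop := ∀ α μ ν σ x, curv Γ α μ ν σ x = 0

/- Absolute parallelism (AP) geometry: a parallelization of ℝⁿ is given by n
vector fields λ_i with contravariant components `lam i μ` and covariant
components `lamd i μ`, mutually dual. -/

/-- The data (lam, lamd) forms a smooth AP-structure:
smoothness and the duality relations λ_i^μ λ_i_ν = δ^μ_ν, λ_i^μ λ_j_μ = δ_ij. -/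
def APSpace {n : ℕ} (lam lamd : Fin n → Fin n → (Fin n → ℝ) → ℝ) : Prop :=
  (∀ i μ, ContDiff ℝ (⊤ : ℕ∞) (lam i μ)) ∧ (∀ i μ, ContDiff ℝ (⊤ : ℕ∞) (lamd i μ)) ∧
  (∀ μ ν x, ∑ i, lam i μ x * lamd i ν x = if μ = ν then (1:ℝ) else 0) ∧
  (∀ i j x, ∑ μ, lam i μ x * lamd j μ x = if i = j then (1:ℝ) else 0)

/-- The canonical connection Γ^α_{μν} = λ_i^α λ_i_{μ,ν} of the AP-space. -/
def apConn {n : ℕ} (lam lamd : Fin n → Fin n → (Fin n → ℝ) → ℝ) : Conn n :=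
  fun α μ ν x => ∑ i, lam i α x * pd (lamd i μ) ν x

/-- The metric g_{μν} = λ_i_μ λ_i_ν of the AP-space. -/
def apMetric {n : ℕ} (lamd : Fin n → Fin n → (Fin n → ℝ) → ℝ)
    (μ ν : Fin n) (x : Fin n → ℝ) : ℝ := ∑ i, lamd i μ x * lamd i ν x

/-- The inverse metric g^{μν} = λ_i^μ λ_i^ν of the AP-space. -/
def apMetricInv {n : ℕ} (lam : Fin n → Fin n → (Fin n → ℝ) → ℝ)
    (μ ν : Fin n) (x : Fin n → ℝ) : ℝ := ∑ i, lam i μ x * lam i ν x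

/-- The Riemannian (Levi-Civita) connection of the metric of the AP-space:
Γ̊^α_{μν} = (1/2) g^{αε}(g_{εν,μ} + g_{εμ,ν} − g_{μν,ε}). -/
def apLC {n : ℕ} (lam lamd : Fin n → Fin n → (Fin n → ℝ) → ℝ) : Conn n :=
  fun α μ ν x => (1/2) * ∑ ε, apMetricInv lam α ε x *
    (pd (apMetric lamd ε ν) μ x + pd (apMetric lamd ε μ) ν x - pd (apMetric lamd μ ν) ε x)

/-- The contortion tensor γ^α_{μν} = Γ^α_{μν} − Γ̊^α_{μν}. -/
def apContortion {n : ℕ} (lam lamd : Fin n → Fin n → (Fin n → ℝ) → ℝ) : Conn n :=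
  fun α μ ν x => apConn lam lamd α μ ν x - apLC lam lamd α μ ν x

/-- The canonical connection of the AP-space is semi-symmetric with defining
1-form w: Λ^α_{μν} = δ^α_μ w_ν − δ^α_ν w_μ. -/
def SemiSymmetric {n : ℕ} (lam lamd : Fin n → Fin n → (Fin n → ℝ) → ℝ)
    (w : Fin n → (Fin n → ℝ) → ℝ) : Prop :=
  (∀ μ, ContDiff ℝ (⊤ : ℕ∞) (w μ)) ∧
  ∀ (α μ ν : Fin n) (x : Fin n → ℝ),
    torsion (apConn lam lamd) α μ ν x =
      (if α = μ then w ν x else 0) - (if α = ν then w μ x else 0)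


set_option linter.unreachableTactic false
set_option linter.unusedTactic false
set_option linter.unnecessarySeqFocus false

lemma pd_const {n : ℕ} (c : ℝ) (ν : Fin n) (x : Fin n → ℝ) : pd (fun _ => c) ν x = 0 := by
  simp [pd]

lemma pd_sub {n : ℕ} {f g : (Fin n → ℝ) → ℝ} {x : Fin n → ℝ}
    (hf : DifferentiableAt ℝ f x) (hg : DifferentiableAt ℝ g x) (ν : Fin n) :
    pd (fun y => f y - g y) ν x = pd f ν x - pd g ν x := by
  simp [pd, fderiv_fun_sub hf hg]

lemma pd_mul {n : ℕ} {f g : (Fin n → ℝ) → ℝ} {x : Fin n → ℝ}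
    (hf : DifferentiableAt ℝ f x) (hg : DifferentiableAt ℝ g x) (ν : Fin n) :
    pd (fun y => f y * g y) ν x = pd f ν x * g x + f x * pd g ν x := by
  simp [pd, fderiv_fun_mul hf hg]; ring

lemma pd_sum {n : ℕ} {ι : Type*} (s : Finset ι) {f : ι → (Fin n → ℝ) → ℝ} {x : Fin n → ℝ}
    (hf : ∀ i ∈ s, DifferentiableAt ℝ (f i) x) (ν : Fin n) :
    pd (fun y => ∑ i ∈ s, f i y) ν x = ∑ i ∈ s, pd (f i) ν x := by
  simp [pd, fderiv_fun_sum hf]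

lemma contDiff_pd {n : ℕ} {f : (Fin n → ℝ) → ℝ} (hf : ContDiff ℝ (⊤ : ℕ∞) f) (ν : Fin n) :
    ContDiff ℝ (⊤ : ℕ∞) (fun x => pd f ν x) :=
  (hf.fderiv_right (by simp)).clm_apply contDiff_const

lemma pd_pd_comm {n : ℕ} {f : (Fin n → ℝ) → ℝ} (hf : ContDiff ℝ (⊤ : ℕ∞) f) (ν σ : Fin n)
    (x : Fin n → ℝ) : pd (pd f σ) ν x = pd (pd f ν) σ x := by
  have hfd : DifferentiableAt ℝ (fderiv ℝ f) x :=
    ((hf.fderiv_right (m := (⊤ : ℕ∞)) (by simp)).differentiable (by simp)) x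
  have hsymm : IsSymmSndFDerivAt ℝ f x := hf.contDiffAt.isSymmSndFDerivAt (by rw [minSmoothness_of_isRCLikeNormedField]; exact WithTop.coe_le_coe.mpr le_top)
  have e : ∀ v w : Fin n → ℝ, fderiv ℝ (fun y => fderiv ℝ f y v) x w
      = fderiv ℝ (fderiv ℝ f) x w v := by
    intro v w
    rw [fderiv_clm_apply hfd (differentiableAt_const v)]
    simp
  show fderiv ℝ (fun y => fderiv ℝ f y (Pi.single σ 1)) x (Pi.single ν 1)
      = fderiv ℝ (fun y => fderiv ℝ f y (Pi.single ν 1)) x (Pi.single σ 1)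
  rw [e, e, hsymm]

section AP
variable {n : ℕ} {lam lamd : Fin n → Fin n → (Fin n → ℝ) → ℝ} (hAP : APSpace lam lamd)
include hAP

lemma contDiff_apConn (α μ ν : Fin n) : ContDiff ℝ (⊤ : ℕ∞) (apConn lam lamd α μ ν) := by
  unfold apConn
  exact ContDiff.sum fun i _ => (hAP.1 i α).mul (contDiff_pd (hAP.2.1 i μ) ν)

lemma diff_apConn (α μ ν : Fin n) (x : Fin n → ℝ) :
    DifferentiableAt ℝ (apConn lam lamd α μ ν) x :=
  ((contDiff_apConn hAP α μ ν).differentiable (by simp)) x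

lemma dlam (α β ν : Fin n) (x : Fin n → ℝ) :
    ∑ i, pd (lam i α) ν x * lamd i β x = - apConn lam lamd α β ν x := by
  obtain ⟨h1, h2, h3, h4⟩ := hAP
  have hc : pd (fun y => ∑ i, lam i α y * lamd i β y) ν x = 0 := by
    have : (fun y => ∑ i, lam i α y * lamd i β y) = fun _ => if α = β then (1:ℝ) else 0 :=
      funext fun y => h3 α β y
    rw [this, pd_const]
  rw [pd_sum Finset.univ (fun i _ => (((h1 i α).differentiable (by simp)) x).fun_mul
      (((h2 i β).differentiable (by simp)) x)) ν] at hc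
  have : ∀ i : Fin n, pd (fun y => lam i α y * lamd i β y) ν x
      = pd (lam i α) ν x * lamd i β x + lam i α x * pd (lamd i β) ν x := fun i =>
    pd_mul (((h1 i α).differentiable (by simp)) x) (((h2 i β).differentiable (by simp)) x) ν
  rw [Finset.sum_congr rfl (fun i _ => this i), Finset.sum_add_distrib] at hc
  have : apConn lam lamd α β ν x = ∑ i, lam i α x * pd (lamd i β) ν x := rfl
  linarith [hc]

lemma pd_lam (j α ν : Fin n) (x : Fin n → ℝ) :
    pd (lam j α) ν x = - ∑ β, apConn lam lamd α β ν x * lam j β x := by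
  have h4 := hAP.2.2.2
  calc pd (lam j α) ν x = ∑ i, pd (lam i α) ν x * (if j = i then 1 else 0) := by
        simp
    _ = ∑ i, pd (lam i α) ν x * (∑ β, lam j β x * lamd i β x) := by
        simp_rw [h4 j]
    _ = ∑ β, (∑ i, pd (lam i α) ν x * lamd i β x) * lam j β x := by
        simp_rw [Finset.mul_sum, Finset.sum_mul]
        rw [Finset.sum_comm]
        congr 1; funext i; congr 1; funext β; ring
    _ = ∑ β, (- apConn lam lamd α β ν x) * lam j β x := by
        simp_rw [dlam hAP]
    _ = - ∑ β, apConn lam lamd α β ν x * lam j β x := by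
        simp
lemma pd_apConn (α μ σ ν : Fin n) (x : Fin n → ℝ) :
    pd (apConn lam lamd α μ σ) ν x
      = - (∑ β, apConn lam lamd α β ν x * apConn lam lamd β μ σ x)
        + ∑ i, lam i α x * pd (pd (lamd i μ) σ) ν x := by
  have hd1 : ∀ i : Fin n, DifferentiableAt ℝ (lam i α) x := fun i =>
    ((hAP.1 i α).differentiable (by simp)) x
  have hd2 : ∀ i : Fin n, DifferentiableAt ℝ (pd (lamd i μ) σ) x := fun i =>
    ((contDiff_pd (hAP.2.1 i μ) σ).differentiable (by simp)) x
  have e1 : pd (apConn lam lamd α μ σ) ν x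
      = ∑ i, (pd (lam i α) ν x * pd (lamd i μ) σ x + lam i α x * pd (pd (lamd i μ) σ) ν x) := by
    have : apConn lam lamd α μ σ = fun y => ∑ i, lam i α y * pd (lamd i μ) σ y := rfl
    rw [this, pd_sum Finset.univ (fun i _ => (hd1 i).fun_mul (hd2 i)) ν]
    exact Finset.sum_congr rfl fun i _ => pd_mul (hd1 i) (hd2 i) ν
  rw [e1, Finset.sum_add_distrib]
  congr 1
  calc ∑ i, pd (lam i α) ν x * pd (lamd i μ) σ x
      = ∑ i, (- ∑ β, apConn lam lamd α β ν x * lam i β x) * pd (lamd i μ) σ x := by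
        simp_rw [pd_lam hAP]
    _ = - ∑ β, apConn lam lamd α β ν x * (∑ i, lam i β x * pd (lamd i μ) σ x) := by
        simp_rw [neg_mul, Finset.sum_neg_distrib, neg_inj, Finset.sum_mul, Finset.mul_sum]
        rw [Finset.sum_comm]
        congr 1; funext i; congr 1; funext β; ring
    _ = - ∑ β, apConn lam lamd α β ν x * apConn lam lamd β μ σ x := rfl

lemma flat_apConn (α μ ν σ : Fin n) (x : Fin n → ℝ) :
    curv (apConn lam lamd) α μ ν σ x = 0 := by
  have h2 := hAP.2.1
  have e1 := pd_apConn hAP α μ σ ν x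
  have e2 := pd_apConn hAP α μ ν σ x
  have hsym : ∑ i, lam i α x * pd (pd (lamd i μ) σ) ν x
      = ∑ i, lam i α x * pd (pd (lamd i μ) ν) σ x := by
    exact Finset.sum_congr rfl fun i _ => by rw [pd_pd_comm (h2 i μ) ν σ x]
  have c1 : ∑ β, apConn lam lamd α β ν x * apConn lam lamd β μ σ x
      = ∑ ε, apConn lam lamd ε μ σ x * apConn lam lamd α ε ν x :=
    Finset.sum_congr rfl fun ε _ => mul_comm _ _
  have c2 : ∑ β, apConn lam lamd α β σ x * apConn lam lamd β μ ν x
      = ∑ ε, apConn lam lamd ε μ ν x * apConn lam lamd α ε σ x :=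
    Finset.sum_congr rfl fun ε _ => mul_comm _ _
  unfold curv
  rw [e1, e2, hsym, c1, c2]
  ring
end AP

/-- for a semi-symmetric canonical connection,
R̃^α_{μνσ} = δ^α_σ w_{ν|μ} − δ^α_ν w_{σ|μ} and R̃_{μν} = (n−1) w_{ν|μ}. -/
theorem dual_curvature_semi_symmetric {n : ℕ}
    (lam lamd : Fin n → Fin n → (Fin n → ℝ) → ℝ) (w : Fin n → (Fin n → ℝ) → ℝ)
    (hAP : APSpace lam lamd) (hss : SemiSymmetric lam lamd w) :
    (∀ (α μ ν σ : Fin n) (x : Fin n → ℝ),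
      curv (dualConn (apConn lam lamd)) α μ ν σ x =
        (if α = σ then covd01 (apConn lam lamd) w ν μ x else 0)
        - (if α = ν then covd01 (apConn lam lamd) w σ μ x else 0)) ∧
    (∀ (μ ν : Fin n) (x : Fin n → ℝ),
      (∑ α, curv (dualConn (apConn lam lamd)) α μ ν α x) =
        ((n : ℝ) - 1) * covd01 (apConn lam lamd) w ν μ x) := by
  set Γ := apConn lam lamd with hΓdef
  have hΛ : ∀ (a b c : Fin n) (x : Fin n → ℝ),
      Γ a b c x - Γ a c b x = (if a = b then w c x else 0) - (if a = c then w b x else 0) :=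
    fun a b c x => hss.2 a b c x
  have hwd : ∀ (μ : Fin n) (x : Fin n → ℝ), DifferentiableAt ℝ (w μ) x := fun μ x =>
    ((hss.1 μ).differentiable (by simp)) x
  have part1 : ∀ (α μ ν σ : Fin n) (x : Fin n → ℝ),
      curv (dualConn Γ) α μ ν σ x =
        (if α = σ then covd01 Γ w ν μ x else 0)
        - (if α = ν then covd01 Γ w σ μ x else 0) := by
    intro α μ ν σ x
    -- flatness equations
    have hA : pd (Γ α σ ν) μ x - pd (Γ α σ μ) ν x
        + ∑ ε, Γ ε σ ν x * Γ α ε μ x - ∑ ε, Γ ε σ μ x * Γ α ε ν x = 0 :=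
      flat_apConn hAP α σ μ ν x
    have hB : pd (Γ α ν σ) μ x - pd (Γ α ν μ) σ x
        + ∑ ε, Γ ε ν σ x * Γ α ε μ x - ∑ ε, Γ ε ν μ x * Γ α ε σ x = 0 :=
      flat_apConn hAP α ν μ σ x
    -- derivative of the torsion relation
    have hT : pd (Γ α σ ν) μ x - pd (Γ α ν σ) μ x
        = (if α = σ then pd (w ν) μ x else 0) - (if α = ν then pd (w σ) μ x else 0) := by
      have hfun : (fun y => Γ α σ ν y - Γ α ν σ y)
          = fun y => (if α = σ then w ν y else 0) - (if α = ν then w σ y else 0) :=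
        funext fun y => hΛ α σ ν y
      have hL : pd (fun y => Γ α σ ν y - Γ α ν σ y) μ x
          = pd (Γ α σ ν) μ x - pd (Γ α ν σ) μ x :=
        pd_sub (diff_apConn hAP α σ ν x) (diff_apConn hAP α ν σ x) μ
      have dif : ∀ (P : Prop) [Decidable P] (c : Fin n),
          DifferentiableAt ℝ (fun y => if P then w c y else 0) x := by
        intro P _ c
        by_cases h : P <;> simp only [h, if_true, if_false] <;>
          first | exact hwd c x | exact differentiableAt_const 0 | skip
      have pd_ite : ∀ (P : Prop) [Decidable P] (c : Fin n),
          pd (fun y => if P then w c y else 0) μ x = if P then pd (w c) μ x else 0 := by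
        intro P _ c
        by_cases h : P <;> simp only [h, if_true, if_false] <;>
          first | rfl | exact pd_const 0 μ x | skip
      rw [← hL, hfun, pd_sub (dif _ ν) (dif _ σ) μ, pd_ite, pd_ite]
    -- the three torsion-sum computations
    have hS1 : (∑ ε, Γ ε σ ν x * Γ α ε μ x) - (∑ ε, Γ ε ν σ x * Γ α ε μ x)
        = Γ α σ μ x * w ν x - Γ α ν μ x * w σ x := by
      rw [← Finset.sum_sub_distrib]
      have : ∀ ε : Fin n, Γ ε σ ν x * Γ α ε μ x - Γ ε ν σ x * Γ α ε μ x
          = ((if ε = σ then w ν x else 0) - (if ε = ν then w σ x else 0)) * Γ α ε μ x := by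
        intro ε; rw [← sub_mul, hΛ ε σ ν x]
      rw [Finset.sum_congr rfl fun ε _ => this ε]
      simp [sub_mul, ite_mul, Finset.sum_sub_distrib, Finset.sum_ite_eq']
      ring
    have hS2 : (∑ ε, Γ ε σ μ x * Γ α ν ε x) - (∑ ε, Γ ε σ μ x * Γ α ε ν x)
        = (if α = ν then ∑ ε, Γ ε σ μ x * w ε x else 0) - Γ α σ μ x * w ν x := by
      rw [← Finset.sum_sub_distrib]
      have : ∀ ε : Fin n, Γ ε σ μ x * Γ α ν ε x - Γ ε σ μ x * Γ α ε ν x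
          = Γ ε σ μ x * ((if α = ν then w ε x else 0) - (if α = ε then w ν x else 0)) := by
        intro ε; rw [← mul_sub, hΛ α ν ε x]
      rw [Finset.sum_congr rfl fun ε _ => this ε]
      by_cases h2 : α = ν <;>
        simp [h2, mul_sub, Finset.sum_sub_distrib, mul_ite, Finset.sum_ite_eq, mul_comm]
    have hS3 : (∑ ε, Γ ε ν μ x * Γ α σ ε x) - (∑ ε, Γ ε ν μ x * Γ α ε σ x)
        = (if α = σ then ∑ ε, Γ ε ν μ x * w ε x else 0) - Γ α ν μ x * w σ x := by
      rw [← Finset.sum_sub_distrib]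
      have : ∀ ε : Fin n, Γ ε ν μ x * Γ α σ ε x - Γ ε ν μ x * Γ α ε σ x
          = Γ ε ν μ x * ((if α = σ then w ε x else 0) - (if α = ε then w σ x else 0)) := by
        intro ε; rw [← mul_sub, hΛ α σ ε x]
      rw [Finset.sum_congr rfl fun ε _ => this ε]
      by_cases h1 : α = σ <;>
        simp [h1, mul_sub, Finset.sum_sub_distrib, mul_ite, Finset.sum_ite_eq, mul_comm]
    have hgoal : curv (dualConn Γ) α μ ν σ x
        = pd (Γ α σ μ) ν x - pd (Γ α ν μ) σ x
          + ∑ ε, Γ ε σ μ x * Γ α ν ε x - ∑ ε, Γ ε ν μ x * Γ α σ ε x := rfl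
    rw [hgoal]
    simp only [covd01]
    split_ifs at hT hS2 hS3 ⊢ <;> linarith
  refine ⟨part1, ?_⟩
  intro μ ν x
  rw [Finset.sum_congr rfl fun α _ => part1 α μ ν α x]
  have hcard : (Finset.univ : Finset (Fin n)).card = n := by simp
  simp [Finset.sum_sub_distrib, Finset.sum_ite_eq', hcard, Finset.sum_const]
  ring
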